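/- Let G be a connected graph with pc(G) = 2 and let v be a vertex not in G. If v is joined to G by at least two edges, then the resulting graph G ∪ {v} satisfies pc(G ∪ {v}) = 2. -/

import Mathlib

open SimpleGraph

variable {V : Type*}

/-- A walk is proper w.r.t. an edge-coloring if consecutive edges get distinct colors. -/
def IsProperWalk {α : Type*} {G : SimpleGraph V} (c : Sym2 V → α) {u v : V} (p : G.Walk u v) : Prop :=
  p.edges.Chain' (fun e f => c e ≠ c f)

/-- An edge-coloring is a proper-path coloring if every pair of vertices is joined by a proper path. -/
def IsProperConnColoring {α : Type*} (G : SimpleGraph V) (c : Sym2 V → α) : Prop :=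
  ∀ u v : V, ∃ p : G.Walk u v, p.IsPath ∧ IsProperWalk c p

/-- The proper connection number. -/
noncomputable def pc (G : SimpleGraph V) : ℕ :=
  sInf {k | ∃ c : Sym2 V → Fin k, IsProperConnColoring G c}

/-- Strong property of an edge-coloring. -/
def HasStrongProp {α : Type*} (G : SimpleGraph V) (c : Sym2 V → α) : Prop :=
  IsProperConnColoring G c ∧
  ∀ u v : V, u ≠ v → ∃ p₁ p₂ : G.Walk u v, p₁.IsPath ∧ p₂.IsPath ∧
    IsProperWalk c p₁ ∧ IsProperWalk c p₂ ∧
    p₁.edges.head?.map c ≠ p₂.edges.head?.map c ∧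
    p₁.edges.getLast?.map c ≠ p₂.edges.getLast?.map c

/-- k-connectedness. -/
def KConnected (k : ℕ) (G : SimpleGraph V) [Fintype V] : Prop :=
  k < Fintype.card V ∧ ∀ S : Finset V, S.card < k → (G.induce ((↑S : Set V)ᶜ)).Connected

/-- edge chromatic number -/
noncomputable def edgeChromatic (G : SimpleGraph V) : ℕ :=
  sInf {k | ∃ c : Sym2 V → Fin k, ∀ e ∈ G.edgeSet, ∀ f ∈ G.edgeSet, e ≠ f →
    (∃ x, x ∈ e ∧ x ∈ f) → c e ≠ c f}

/-- rainbow connection number -/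
noncomputable def rc (G : SimpleGraph V) : ℕ :=
  sInf {k | ∃ c : Sym2 V → Fin k, ∀ u v : V, ∃ p : G.Walk u v, p.IsPath ∧ (p.edges.map c).Nodup}

/-!
Fix a proper 2-colouring of `G`, two neighbours `x ≠ y` of the new vertex `v`, and a proper path
`W` from `y` to `x`. Colouring `vx` and `vy` unlike the last and first edges of `W` makes the cycle
`v y W x v` properly coloured except possibly at `v`. A proper path from any vertex `u` to `x` first
meets this cycle at some `w`; the two cycle edges at `w` have different colours, so one of them
differs from the edge the path arrives on, and following the cycle in that direction leads
properly to `v`. One colour cannot suffice, since it would make `G` complete and `pc G ≤ 1`.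
-/

variable {α : Type*} {G : SimpleGraph V}

section ProperWalk

variable {c : Sym2 V → α} {u v w : V}

lemma isProperWalk_iff {p : G.Walk u v} :
    IsProperWalk c p ↔ p.edges.IsChain (fun e f => c e ≠ c f) :=
  Iff.rfl

@[simp]
lemma isProperWalk_nil : IsProperWalk c (Walk.nil : G.Walk u u) :=
  List.isChain_nil

@[simp]
lemma isProperWalk_single (h : G.Adj u v) : IsProperWalk c (Walk.cons h Walk.nil) :=
  List.isChain_singleton _

lemma isProperWalk_append_iff {p : G.Walk u v} {q : G.Walk v w} :
    IsProperWalk c (p.append q) ↔ IsProperWalk c p ∧ IsProperWalk c q ∧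
      ∀ e ∈ p.edges.getLast?, ∀ f ∈ q.edges.head?, c e ≠ c f := by
  simp only [isProperWalk_iff, Walk.edges_append, List.isChain_append]

lemma isProperWalk_cons_iff (h : G.Adj u v) {p : G.Walk v w} :
    IsProperWalk c (Walk.cons h p) ↔
      (∀ e ∈ p.edges.head?, c s(u, v) ≠ c e) ∧ IsProperWalk c p := by
  simp only [isProperWalk_iff, Walk.edges_cons, List.isChain_cons, Option.mem_def]

lemma isProperWalk_concat_iff {p : G.Walk u v} (h : G.Adj v w) :
    IsProperWalk c (p.concat h) ↔
      IsProperWalk c p ∧ ∀ e ∈ p.edges.getLast?, c e ≠ c s(v, w) := by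
  simp [Walk.concat_eq_append, isProperWalk_append_iff]

lemma IsProperWalk.reverse {p : G.Walk u v} (hp : IsProperWalk c p) :
    IsProperWalk c p.reverse := by
  rw [isProperWalk_iff, Walk.edges_reverse, List.isChain_reverse]
  exact hp.imp fun _ _ h => h.symm

lemma isProperWalk_map {W : Type*} {G' : SimpleGraph W} (f : G →g G') {c : Sym2 W → α}
    {p : G.Walk u v} : IsProperWalk c (p.map f) ↔ IsProperWalk (c ∘ Sym2.map f) p := by
  simp only [isProperWalk_iff, Walk.edges_map, List.isChain_map, Function.comp_apply]

lemma IsProperWalk.length_le_one [Subsingleton α] {p : G.Walk u v} (hp : IsProperWalk c p) :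
    p.length ≤ 1 := by
  match p, hp with
  | .nil, _ => simp
  | .cons _ .nil, _ => simp
  | .cons _ (.cons _ _), hp =>
    simp only [isProperWalk_iff, Walk.edges_cons, List.isChain_cons_cons] at hp
    exact absurd (Subsingleton.elim _ _) hp.1

end ProperWalk

namespace SimpleGraph.Walk

variable {u v w : V}

lemma IsPath.append_of_support_inter {p : G.Walk u v} {q : G.Walk v w} (hp : p.IsPath)
    (hq : q.IsPath) (hpq : ∀ x ∈ p.support, x ∈ q.support → x = v) : (p.append q).IsPath := by
  have hq' := hq.support_nodup
  rw [← cons_tail_support, List.nodup_cons] at hq'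
  rw [isPath_def, support_append, List.nodup_append]
  refine ⟨hp.support_nodup, hq'.2, fun x hx y hy hxy => ?_⟩
  subst hxy
  exact hq'.1 (hpq x hx (List.mem_of_mem_tail hy) ▸ hy)

lemma exists_eq_append_of_end_mem (p : G.Walk u w) (S : Set V) (hw : w ∈ S) :
    ∃ v ∈ S, ∃ (p₁ : G.Walk u v) (p₂ : G.Walk v w), p = p₁.append p₂ ∧
      ∀ x ∈ p₁.support, x ∈ S → x = v := by
  induction p with
  | nil => exact ⟨_, hw, nil, nil, rfl, by simp⟩
  | @cons u u' w h p ih =>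
    by_cases hu : u ∈ S
    · exact ⟨u, hu, nil, cons h p, rfl, by simp⟩
    · obtain ⟨v, hv, p₁, p₂, rfl, hp₁⟩ := ih hw
      refine ⟨v, hv, cons h p₁, p₂, rfl, ?_⟩
      rintro x (_ | ⟨_, hx⟩) hxS
      · exact absurd hxS hu
      · exact hp₁ x hx hxS

lemma IsPath.isCycle_cons_concat {p : G.Walk v u} (hp : p.IsPath) (hw : w ∉ p.support)
    (huv : u ≠ v) (hu : G.Adj u w) (hv : G.Adj v w) : (cons hv.symm (p.concat hu)).IsCycle := by
  refine (cons_isCycle_iff _ _).2 ⟨hp.concat hw hu, fun h => ?_⟩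
  rw [edges_concat, List.concat_eq_append, List.mem_append, List.mem_singleton] at h
  rcases h with h | h
  · exact hw (fst_mem_support_of_mem_edges p h)
  · simp only [Sym2.eq, Sym2.rel_iff', Prod.mk.injEq, Prod.swap_prod_mk] at h
    rcases h with ⟨rfl, -⟩ | ⟨-, rfl⟩
    · exact hw p.end_mem_support
    · exact huv rfl

end SimpleGraph.Walk

open Walk in
/-- `IsProperWalk c C` does not compare the last edge of `C` with its first, so `C` may be
improperly coloured at `v`. -/
theorem exists_isProperWalk_of_isCycle {c : Sym2 V → α} {u v z : V} (C : G.Walk v v)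
    (hC : C.IsCycle) (hCc : IsProperWalk c C) (P : G.Walk u z) (hP : P.IsPath)
    (hPc : IsProperWalk c P) (hz : z ∈ C.support) :
    ∃ q : G.Walk u v, q.IsPath ∧ IsProperWalk c q := by
  obtain ⟨w, hwC, P₁, P₂, rfl, hP₁C⟩ := P.exists_eq_append_of_end_mem {x | x ∈ C.support} hz
  have hP₁ : P₁.IsPath := hP.of_append_left
  have hP₁c : IsProperWalk c P₁ := (isProperWalk_append_iff.1 hPc).1
  by_cases hwv : w = v
  · subst hwv
    exact ⟨P₁, hP₁, hP₁c⟩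
  obtain ⟨C₁, C₂, rfl⟩ := mem_support_iff_exists_append.1 hwC
  have hjoin : ∀ {q : G.Walk w v}, q.IsPath → IsProperWalk c q →
      (∀ x ∈ q.support, x ∈ (C₁.append C₂).support) →
      (∀ e ∈ P₁.edges.getLast?, ∀ f ∈ q.edges.head?, c e ≠ c f) →
      ∃ q : G.Walk u v, q.IsPath ∧ IsProperWalk c q := fun hq hqc hqC hturn =>
    ⟨_, hP₁.append_of_support_inter hq fun x hx hxq => hP₁C x hx (hqC x hxq),
      isProperWalk_append_iff.2 ⟨hP₁c, hqc, hturn⟩⟩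
  obtain ⟨hC₁c, hC₂c, hCw⟩ := isProperWalk_append_iff.1 hCc
  by_cases hfwd : ∀ e ∈ P₁.edges.getLast?, ∀ f ∈ C₂.edges.head?, c e ≠ c f
  · exact hjoin (hC.isPath_of_append_right (not_nil_of_ne (Ne.symm hwv))) hC₂c
      (fun _ => (support_subset_support_append_right _ _ ·)) hfwd
  · push Not at hfwd
    obtain ⟨e, he, f, hf, hef⟩ := hfwd
    refine hjoin (hC.isPath_of_append_left (not_nil_of_ne hwv)).reverse hC₁c.reverse
      (fun _ hx => support_subset_support_append_left _ _ (by simpa using hx)) ?_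
    intro e' he' f' hf'
    rw [Option.mem_unique he' he]
    rw [edges_reverse, List.head?_reverse] at hf'
    exact hef ▸ (hCw f' hf' f hf).symm

lemma Option.exists_forall_mem_ne {β : Type*} [Nontrivial α] (o : Option β) (f : β → α) :
    ∃ b, ∀ e ∈ o, f e ≠ b := by
  cases o with
  | none => exact ⟨Classical.arbitrary α, by simp⟩
  | some e =>
    obtain ⟨b, hb⟩ := exists_ne (f e)
    exact ⟨b, by simpa using hb.symm⟩

lemma Sym2.none_notMem_map_some (e : Sym2 V) : none ∉ e.map some := by
  simp [Sym2.mem_map]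

lemma exists_extend_sym2_option (c : Sym2 V → α) {x y : V} (hxy : x ≠ y) (cx cy : α) :
    ∃ c' : Sym2 (Option V) → α, c' ∘ Sym2.map some = c ∧
      c' s(some x, none) = cx ∧ c' s(some y, none) = cy := by
  classical
  have hnew : ∀ a : V, ¬∃ e, Sym2.map some e = s(some a, none) := fun a ⟨e, he⟩ =>
    Sym2.none_notMem_map_some e (he ▸ Sym2.mem_mk_right _ _)
  refine ⟨Function.extend (Sym2.map some) c fun e => if e = s(some x, none) then cx else cy,
    Function.extend_comp (Sym2.map.injective (Option.some_injective V)) _ _, ?_, ?_⟩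
  · simp [Function.extend_apply' _ _ _ (hnew x)]
  · simp [Function.extend_apply' _ _ _ (hnew y), hxy.symm]

open Walk in
theorem IsProperConnColoring.option {c : Sym2 V → α} (hc : IsProperConnColoring G c)
    {H : SimpleGraph (Option V)} (hH : ∀ a b : V, H.Adj (some a) (some b) ↔ G.Adj a b)
    {c' : Sym2 (Option V) → α} (hc' : c' ∘ Sym2.map some = c) {x y : V} (hxy : x ≠ y)
    (hx : H.Adj (some x) none) (hy : H.Adj (some y) none) {W : G.Walk y x} (hW : W.IsPath)
    (hWc : IsProperWalk c W) (hWy : ∀ e ∈ W.edges.head?, c e ≠ c' s(some y, none))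
    (hWx : ∀ e ∈ W.edges.getLast?, c e ≠ c' s(some x, none)) :
    IsProperConnColoring H c' := by
  let f : G →g H := ⟨some, (hH _ _).2⟩
  have hf : Function.Injective f := Option.some_injective V
  have hcomp : ∀ e, c' (e.map f) = c e := congrFun hc'
  have hmap : ∀ {a b : V} {p : G.Walk a b}, IsProperWalk c p → IsProperWalk c' (p.map f) :=
    fun hp => isProperWalk_map f |>.2 (hc' ▸ hp)
  let C : H.Walk none none := cons hy.symm ((W.map f).concat hx)
  have hC : C.IsCycle := (hW.map hf).isCycle_cons_concat (by simp [f]) (hf.ne hxy) hx hy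
  have hCc : IsProperWalk c' C := by
    have hWne : W.edges ≠ [] := by simpa using not_nil_of_ne hxy.symm
    rw [isProperWalk_cons_iff, isProperWalk_concat_iff, edges_concat, List.concat_eq_append,
      List.head?_append_of_ne_nil _ (by simpa [edges_map] using hWne)]
    refine ⟨?_, hmap hWc, ?_⟩ <;>
      simp only [edges_map, List.head?_map, List.getLast?_map, Option.mem_map,
        forall_exists_index, and_imp, forall_apply_eq_imp_iff₂]
    · intro e he
      rw [Sym2.eq_swap, hcomp]
      exact (hWy e he).symm
    · intro e he
      rw [hcomp]
      exact hWx e he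
  have hto : ∀ a : V, ∃ q : H.Walk (some a) none, q.IsPath ∧ IsProperWalk c' q := fun a =>
    have ⟨P, hP, hPc⟩ := hc a x
    exists_isProperWalk_of_isCycle C hC hCc (P.map f) (hP.map hf) (hmap hPc) (by simp [C, f])
  rintro (_ | a) (_ | b)
  · exact ⟨nil, .nil, isProperWalk_nil⟩
  · obtain ⟨q, hq, hqc⟩ := hto b
    exact ⟨q.reverse, hq.reverse, hqc.reverse⟩
  · exact hto a
  · obtain ⟨p, hp, hpc⟩ := hc a b
    exact ⟨p.map f, hp.map hf, hmap hpc⟩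

theorem IsProperConnColoring.exists_option [Nontrivial α] {c : Sym2 V → α}
    (hc : IsProperConnColoring G c) {H : SimpleGraph (Option V)}
    (hH : ∀ a b : V, H.Adj (some a) (some b) ↔ G.Adj a b) {x y : V} (hxy : x ≠ y)
    (hx : H.Adj (some x) none) (hy : H.Adj (some y) none) :
    ∃ c' : Sym2 (Option V) → α, IsProperConnColoring H c' := by
  obtain ⟨W, hW, hWc⟩ := hc y x
  obtain ⟨cx, hcx⟩ := Option.exists_forall_mem_ne W.edges.getLast? c
  obtain ⟨cy, hcy⟩ := Option.exists_forall_mem_ne W.edges.head? c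
  obtain ⟨c', hc', rfl, rfl⟩ := exists_extend_sym2_option c hxy cx cy
  exact ⟨c', hc.option hH hc' hxy hx hy hW hWc hcy hcx⟩

lemma exists_adj_some_none_of_two_le_ncard {H : SimpleGraph (Option V)}
    (h : 2 ≤ (H.neighborSet none).ncard) :
    ∃ x y : V, x ≠ y ∧ H.Adj (some x) none ∧ H.Adj (some y) none := by
  obtain ⟨a, b, ha, hb, hab⟩ :=
    (Set.one_lt_ncard_iff (Set.finite_of_ncard_ne_zero (by omega))).1 h
  rcases a with _ | x
  · exact absurd ha H.irrefl
  rcases b with _ | y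
  · exact absurd hb H.irrefl
  exact ⟨x, y, fun h => hab (congrArg some h), ha.symm, hb.symm⟩

lemma pc_le {k : ℕ} {c : Sym2 V → Fin k} (hc : IsProperConnColoring G c) : pc G ≤ k :=
  Nat.sInf_le ⟨c, hc⟩

lemma exists_isProperConnColoring_of_pc_eq {k : ℕ} (h : pc G = k) (hk : k ≠ 0) :
    ∃ c : Sym2 V → Fin k, IsProperConnColoring G c :=
  h ▸ Nat.sInf_mem (Nat.nonempty_of_pos_sInf (Nat.pos_of_ne_zero (h ▸ hk)))

lemma IsProperConnColoring.eq_or_adj [Subsingleton α] {c : Sym2 V → α}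
    (hc : IsProperConnColoring G c) (u v : V) : u = v ∨ G.Adj u v := by
  obtain ⟨p, -, hp⟩ := hc u v
  rcases Nat.le_one_iff_eq_zero_or_eq_one.1 hp.length_le_one with h | h
  · exact .inl (Walk.eq_of_length_eq_zero h)
  · exact .inr (Walk.adj_of_length_eq_one h)

lemma eq_or_adj_of_pc_le_one {k : ℕ} {c : Sym2 V → Fin k} (hc : IsProperConnColoring G c)
    (h : pc G ≤ 1) (u v : V) : u = v ∨ G.Adj u v := by
  obtain ⟨c₁, hc₁⟩ : ∃ c₁ : Sym2 V → Fin (pc G), IsProperConnColoring G c₁ :=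
    Nat.sInf_mem (s := {k | ∃ c : Sym2 V → Fin k, IsProperConnColoring G c}) ⟨k, c, hc⟩
  have : Subsingleton (Fin (pc G)) := Fin.subsingleton_iff_le_one.2 h
  exact hc₁.eq_or_adj u v

lemma pc_le_one_of_forall_eq_or_adj (h : ∀ u v : V, u = v ∨ G.Adj u v) : pc G ≤ 1 := by
  refine pc_le (c := fun _ => (0 : Fin 1)) fun u v => ?_
  rcases h u v with rfl | huv
  · exact ⟨.nil, .nil, isProperWalk_nil⟩
  · exact ⟨.cons huv .nil, .cons .nil (by simpa using huv.ne), isProperWalk_single huv⟩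

theorem stmt_4_general (G : SimpleGraph V) (hpc : pc G = 2)
    (H : SimpleGraph (Option V))
    (hH : ∀ a b : V, H.Adj (some a) (some b) ↔ G.Adj a b)
    (hdeg : 2 ≤ (H.neighborSet none).ncard) :
    pc H = 2 := by
  obtain ⟨c, hc⟩ := exists_isProperConnColoring_of_pc_eq hpc two_ne_zero
  obtain ⟨x, y, hxy, hx, hy⟩ := exists_adj_some_none_of_two_le_ncard hdeg
  obtain ⟨c', hc'⟩ := hc.exists_option hH hxy hx hy
  refine le_antisymm (pc_le hc') (not_lt.1 fun hlt => ?_)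
  have hG : pc G ≤ 1 := pc_le_one_of_forall_eq_or_adj fun a b => by
    simpa [hH] using eq_or_adj_of_pc_le_one hc' (Nat.lt_succ_iff.1 hlt) (some a) (some b)
  omega

theorem stmt_4 (G : SimpleGraph V) (hG : G.Connected) (hpc : pc G = 2)
    (H : SimpleGraph (Option V))
    (hH : ∀ a b : V, H.Adj (some a) (some b) ↔ G.Adj a b)
    (hdeg : 2 ≤ (H.neighborSet none).ncard) :
    pc H = 2 :=
  stmt_4_general G hpc H hH hdeg
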